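/- arXiv:2310.17009 — 2 statements merged into one kernel-verified Lean document; each statement's English description precedes it below -/
import Mathlib

section
/- The interval score U(r, l, θ) = (r − l) + (2/α)(l − θ)𝟙(θ < l) + (2/α)(θ − r)𝟙(θ > r) is uniquely minimized in expectation by the pair of true quantiles: if p is a continuous, strictly positive density on ℝ with α/2 quantile l_p and 1−α/2 quantile r_p, then E_{θ∼p} U(r_p, l_p, θ) ≤ E_{θ∼p} U(r, l, θ) for all l ≤ r, with equality iff (r, l) = (r_p, l_p). -/
/-!
Write `G c = ∫ (c - θ)⁺ p θ dθ`. Since `G c = c P(c) - ∫_{θ ≤ c} θ p θ dθ`, its derivative is the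
CDF `P`, and `(θ - c)⁺ = (c - θ)⁺ + (θ - c)` turns the right penalty into `G` as well. The expected
score becomes `(2/α) ((G l - (α/2) l) + (G r - (1 - α/2) r) + E θ)`. The function `c ↦ G c - τ c`
has the strictly increasing derivative `P - τ`, which vanishes at the `τ`-quantile, so by the mean
value theorem it is strictly minimized there.
-/

open MeasureTheory Set

theorem hasDerivAt_integral_Iic {f : ℝ → ℝ} (hc : Continuous f) (hf : Integrable f) (t : ℝ) :
    HasDerivAt (fun u => ∫ x in Iic u, f x) (f t) t := by
  have hsplit : (fun u => ∫ x in Iic u, f x) = fun u => (∫ x in Iic 0, f x) + ∫ x in 0..u, f x := by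
    funext u
    rw [← intervalIntegral.integral_Iic_sub_Iic hf.integrableOn hf.integrableOn, add_sub_cancel]
  rw [hsplit]
  exact (intervalIntegral.integral_hasDerivAt_right hf.intervalIntegrable
    (hc.stronglyMeasurableAtFilter _ _) hc.continuousAt).const_add _

theorem strictMono_integral_Iic {f : ℝ → ℝ} (hf : Integrable f) (hpos : ∀ x, 0 < f x) :
    StrictMono fun u => ∫ x in Iic u, f x := by
  intro a b hab
  have hdiff : (∫ x in Iic b, f x) - ∫ x in Iic a, f x = ∫ x in a..b, f x :=
    intervalIntegral.integral_Iic_sub_Iic hf.integrableOn hf.integrableOn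
  have hpos_ab := intervalIntegral.intervalIntegral_pos_of_pos hf.intervalIntegrable hpos hab
  change ∫ x in Iic a, f x < ∫ x in Iic b, f x
  linarith

theorem lt_of_hasDerivAt_of_strictMono {f f' : ℝ → ℝ} (hf : ∀ x, HasDerivAt f (f' x) x)
    (hf' : StrictMono f') {a b : ℝ} (ha : f' a = 0) (hb : b ≠ a) : f a < f b := by
  have hcont : Continuous f := continuous_iff_continuousAt.2 fun x => (hf x).continuousAt
  rcases hb.lt_or_gt with hba | hab
  · obtain ⟨c, hc, hslope⟩ := exists_hasDerivAt_eq_slope f f' hba hcont.continuousOn fun x _ => hf x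
    have : f' c < 0 := ha ▸ hf' hc.2
    rw [hslope, div_neg_iff] at this
    rcases this with ⟨-, h⟩ | ⟨h, -⟩ <;> linarith
  · obtain ⟨c, hc, hslope⟩ := exists_hasDerivAt_eq_slope f f' hab hcont.continuousOn fun x _ => hf x
    have : 0 < f' c := ha ▸ hf' hc.1
    rw [hslope, div_pos_iff] at this
    rcases this with ⟨h, -⟩ | ⟨-, h⟩ <;> linarith

noncomputable def lowerPartialMoment (p : ℝ → ℝ) (c : ℝ) : ℝ :=
  ∫ θ, (if θ < c then c - θ else 0) * p θ

section LowerPartialMoment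

variable {p : ℝ → ℝ}

theorem ite_lt_sub_mul_eq_indicator (c θ : ℝ) :
    (if θ < c then c - θ else 0) * p θ = (Iio c).indicator (fun θ => (c - θ) * p θ) θ := by
  by_cases h : θ < c <;> simp [h]

theorem integrable_ite_lt_sub_mul (hint : Integrable p) (hmom : Integrable fun x => x * p x)
    (c : ℝ) : Integrable fun θ => (if θ < c then c - θ else 0) * p θ := by
  have h : Integrable fun θ => (c - θ) * p θ :=
    ((hint.const_mul c).sub hmom).congr (.of_forall fun θ => (sub_mul c θ (p θ)).symm)
  simpa only [ite_lt_sub_mul_eq_indicator] using h.indicator measurableSet_Iio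

theorem lowerPartialMoment_eq (hint : Integrable p) (hmom : Integrable fun x => x * p x)
    (c : ℝ) : lowerPartialMoment p c = c * (∫ x in Iic c, p x) - ∫ x in Iic c, x * p x := by
  simp only [lowerPartialMoment, ite_lt_sub_mul_eq_indicator, integral_indicator measurableSet_Iio,
    ← integral_Iic_eq_integral_Iio, sub_mul]
  rw [integral_sub (hint.const_mul c).integrableOn hmom.integrableOn, integral_const_mul]

theorem hasDerivAt_lowerPartialMoment (hc : Continuous p) (hint : Integrable p)
    (hmom : Integrable fun x => x * p x) (c : ℝ) :
    HasDerivAt (lowerPartialMoment p) (∫ x in Iic c, p x) c := by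
  simp_rw [funext (lowerPartialMoment_eq hint hmom)]
  exact (((hasDerivAt_id' c).mul (hasDerivAt_integral_Iic hc hint c)).sub
    (hasDerivAt_integral_Iic (f := fun x => x * p x) (continuous_id.mul hc) hmom c)).congr_deriv
    (by ring)

/-- Up to a constant, `lowerPartialMoment p c - τ * c` is the expected pinball loss of level `τ`. -/
theorem lowerPartialMoment_sub_mul_lt (hc : Continuous p) (hpos : ∀ x, 0 < p x)
    (hint : Integrable p) (hmom : Integrable fun x => x * p x) {τ q c : ℝ}
    (hq : ∫ x in Iic q, p x = τ) (hcq : c ≠ q) :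
    lowerPartialMoment p q - τ * q < lowerPartialMoment p c - τ * c :=
  lt_of_hasDerivAt_of_strictMono
    (fun x => (hasDerivAt_lowerPartialMoment hc hint hmom x).sub ((hasDerivAt_id' x).const_mul τ))
    (fun _ _ hab => by simpa using strictMono_integral_Iic hint hpos hab) (by simp [hq]) hcq

theorem lowerPartialMoment_sub_mul_le (hc : Continuous p) (hpos : ∀ x, 0 < p x)
    (hint : Integrable p) (hmom : Integrable fun x => x * p x) {τ q : ℝ}
    (hq : ∫ x in Iic q, p x = τ) (c : ℝ) :
    lowerPartialMoment p q - τ * q ≤ lowerPartialMoment p c - τ * c := by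
  rcases eq_or_ne c q with rfl | hcq
  · rfl
  · exact (lowerPartialMoment_sub_mul_lt hc hpos hint hmom hq hcq).le

theorem ite_lt_sub_add_sub (c θ : ℝ) :
    (if θ < c then c - θ else 0) + (θ - c) = if c < θ then θ - c else 0 := by
  rcases lt_trichotomy θ c with h | rfl | h
  · simp [h, h.not_gt]
  · simp
  · simp [h, h.not_gt]

theorem ite_gt_sub_mul_eq (c θ : ℝ) :
    (if c < θ then θ - c else 0) * p θ
      = (if θ < c then c - θ else 0) * p θ + (θ * p θ - c * p θ) := by
  rw [← ite_lt_sub_add_sub]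
  ring

theorem integrable_ite_gt_sub_mul (hint : Integrable p) (hmom : Integrable fun x => x * p x)
    (c : ℝ) : Integrable fun θ => (if c < θ then θ - c else 0) * p θ :=
  ((integrable_ite_lt_sub_mul hint hmom c).add (hmom.sub (hint.const_mul c))).congr
    (.of_forall fun θ => (ite_gt_sub_mul_eq c θ).symm)

theorem integral_ite_gt_sub_mul (hint : Integrable p) (hnorm : ∫ x, p x = 1)
    (hmom : Integrable fun x => x * p x) (c : ℝ) :
    ∫ θ, (if c < θ then θ - c else 0) * p θ = lowerPartialMoment p c + (∫ x, x * p x) - c := by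
  simp_rw [ite_gt_sub_mul_eq]
  rw [integral_add (integrable_ite_lt_sub_mul hint hmom c) (by exact hmom.sub (hint.const_mul c)),
    integral_sub hmom (hint.const_mul c), integral_const_mul, hnorm, lowerPartialMoment]
  ring

theorem integral_interval_score (hint : Integrable p) (hnorm : ∫ x, p x = 1)
    (hmom : Integrable fun x => x * p x) (α l r : ℝ) :
    ∫ θ, ((r - l) + (2 / α) * (if θ < l then l - θ else 0)
        + (2 / α) * (if r < θ then θ - r else 0)) * p θ
      = (r - l) + (2 / α) * lowerPartialMoment p l
        + (2 / α) * (lowerPartialMoment p r + (∫ x, x * p x) - r) := by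
  have hl := (integrable_ite_lt_sub_mul hint hmom l).const_mul (2 / α)
  have hr := (integrable_ite_gt_sub_mul hint hmom r).const_mul (2 / α)
  simp_rw [add_mul, mul_assoc]
  rw [integral_add (by exact (hint.const_mul _).add hl) hr,
    integral_add (hint.const_mul _) hl, integral_const_mul, integral_const_mul, integral_const_mul,
    integral_ite_gt_sub_mul hint hnorm hmom, hnorm]
  simp only [lowerPartialMoment]
  ring

end LowerPartialMoment

theorem interval_score_uniquely_minimized_general
    (p : ℝ → ℝ) (hc : Continuous p) (hpos : ∀ x, 0 < p x)
    (hint : Integrable p) (hnorm : ∫ x, p x = 1)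
    (hmom : Integrable (fun x => x * p x))
    (α : ℝ) (hα : α ∈ Set.Ioo (0:ℝ) 1)
    (lp rp : ℝ)
    (hlp : ∫ x in Set.Iic lp, p x = α / 2)
    (hrp : ∫ x in Set.Iic rp, p x = 1 - α / 2)
    (l r : ℝ) :
    (∫ θ, ((rp - lp) + (2 / α) * (if θ < lp then lp - θ else 0)
        + (2 / α) * (if rp < θ then θ - rp else 0)) * p θ
      ≤ ∫ θ, ((r - l) + (2 / α) * (if θ < l then l - θ else 0)
        + (2 / α) * (if r < θ then θ - r else 0)) * p θ)
    ∧ ((∫ θ, ((rp - lp) + (2 / α) * (if θ < lp then lp - θ else 0)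
        + (2 / α) * (if rp < θ then θ - rp else 0)) * p θ
      = ∫ θ, ((r - l) + (2 / α) * (if θ < l then l - θ else 0)
        + (2 / α) * (if r < θ then θ - r else 0)) * p θ)
        ↔ (r = rp ∧ l = lp)) := by
  have hα0 : α ≠ 0 := hα.1.ne'
  have hpinball : ∀ l r, (r - l) + (2 / α) * lowerPartialMoment p l
      + (2 / α) * (lowerPartialMoment p r + (∫ x, x * p x) - r)
      = (2 / α) * ((lowerPartialMoment p l - α / 2 * l)
        + (lowerPartialMoment p r - (1 - α / 2) * r) + ∫ x, x * p x) := by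
    intro l r; field_simp; ring
  simp only [integral_interval_score hint hnorm hmom, hpinball,
    mul_le_mul_iff_right₀ (div_pos two_pos hα.1), mul_right_inj' (div_ne_zero two_ne_zero hα0),
    add_le_add_iff_right, add_left_inj]
  have hl := lowerPartialMoment_sub_mul_le hc hpos hint hmom hlp l
  have hr := lowerPartialMoment_sub_mul_le hc hpos hint hmom hrp r
  refine ⟨add_le_add hl hr, fun h => ⟨?_, ?_⟩, by rintro ⟨rfl, rfl⟩; rfl⟩
  · by_contra hne
    linarith [lowerPartialMoment_sub_mul_lt hc hpos hint hmom hrp hne]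
  · by_contra hne
    linarith [lowerPartialMoment_sub_mul_lt hc hpos hint hmom hlp hne]

/-- The interval score
`U(r, l, θ) = (r - l) + (2/α)(l - θ)𝟙(θ < l) + (2/α)(θ - r)𝟙(θ > r)`
is uniquely minimized in expectation by the pair of true quantiles `(r_p, l_p)`
of a continuous, strictly positive density `p`, where `P(l_p) = α/2` and
`P(r_p) = 1 - α/2`. -/
theorem interval_score_uniquely_minimized
    (p : ℝ → ℝ) (hc : Continuous p) (hpos : ∀ x, 0 < p x)
    (hint : Integrable p) (hnorm : ∫ x, p x = 1)
    (hmom : Integrable (fun x => x * p x))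
    (α : ℝ) (hα : α ∈ Set.Ioo (0:ℝ) 1)
    (lp rp : ℝ)
    (hlp : ∫ x in Set.Iic lp, p x = α / 2)
    (hrp : ∫ x in Set.Iic rp, p x = 1 - α / 2)
    (l r : ℝ) (hlr : l ≤ r) :
    (∫ θ, ((rp - lp) + (2 / α) * (if θ < lp then lp - θ else 0)
        + (2 / α) * (if rp < θ then θ - rp else 0)) * p θ
      ≤ ∫ θ, ((r - l) + (2 / α) * (if θ < l then l - θ else 0)
        + (2 / α) * (if r < θ then θ - r else 0)) * p θ)
    ∧ ((∫ θ, ((rp - lp) + (2 / α) * (if θ < lp then lp - θ else 0)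
        + (2 / α) * (if rp < θ then θ - rp else 0)) * p θ
      = ∫ θ, ((r - l) + (2 / α) * (if θ < l then l - θ else 0)
        + (2 / α) * (if r < θ then θ - r else 0)) * p θ)
        ↔ (r = rp ∧ l = lp)) :=
  interval_score_uniquely_minimized_general p hc hpos hint hnorm hmom α hα lp rp hlp hrp l r
end

section
/- For the balanced binary classification objective, the optimal classifier and its value yield the Jensen–Shannon divergence: for densities p and q on a common space, max over measurable f: X → (0,1) of (1/2)E_{x∼p} log f(x) + (1/2)E_{x∼q} log(1 − f(x)) equals JS(p, q) − log 2, attained at f*(x) = p(x)/(p(x)+q(x)), where JS(p,q) = (1/2)KL(p‖m) + (1/2)KL(q‖m) with m = (p+q)/2. -/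
open MeasureTheory

lemma split_log (a b : ℝ) (ha : 0 ≤ a) (hb : 0 ≤ b) :
    a * Real.log (a / ((a + b) / 2)) = a * Real.log (a / (a + b)) + a * Real.log 2 := by
  rcases eq_or_lt_of_le ha with h | h
  · simp [← h]
  · have hab : 0 < a + b := by linarith
    have : a / ((a + b) / 2) = (a / (a + b)) * 2 := by field_simp
    rw [this, Real.log_mul (by positivity) two_ne_zero]; ring

lemma aux_ineq (a b t : ℝ) (ha : 0 ≤ a) (hb : 0 ≤ b) (ht : 0 < t) :
    a * Real.log t ≤ a * Real.log (a / (a + b)) + (t * (a + b) - a) := by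
  rcases eq_or_lt_of_le ha with h | h
  · simp [← h]; positivity
  · have hab : 0 < a + b := by linarith
    have hratio : 0 < t * (a + b) / a := by positivity
    have hlog := Real.log_le_sub_one_of_pos hratio
    have heq : Real.log (t * (a + b) / a) = Real.log t - Real.log (a / (a + b)) := by
      rw [Real.log_div (by positivity) h.ne', Real.log_mul ht.ne' hab.ne',
        Real.log_div h.ne' hab.ne']
      ring
    rw [heq] at hlog
    have hm := mul_le_mul_of_nonneg_left hlog ha
    have hdiv : a * (t * (a + b) / a - 1) = t * (a + b) - a := by field_simp
    nlinarith [hm]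

lemma key_ineq (a b t : ℝ) (ha : 0 ≤ a) (hb : 0 ≤ b) (ht0 : 0 < t) (ht1 : t < 1) :
    a * Real.log t + b * Real.log (1 - t)
      ≤ a * Real.log (a / (a + b)) + b * Real.log (b / (a + b)) := by
  have h1 := aux_ineq a b t ha hb ht0
  have h2 := aux_ineq b a (1 - t) hb ha (by linarith)
  rw [add_comm b a] at h2
  have hz : (t * (a + b) - a) + ((1 - t) * (a + b) - b) = 0 := by ring
  linarith

/-- The balanced binary classification objective is maximized by the optimal
discriminator `f*(x) = p(x)/(p(x)+q(x))`, and its optimal value equals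
`JS(p, q) − log 2`, where `JS` is the Jensen–Shannon divergence. -/
theorem optimal_discriminator_js
    {X : Type*} [MeasurableSpace X] (ν : Measure X)
    (p q : X → ℝ)
    (hpm : Measurable p) (hqm : Measurable q)
    (hp0 : ∀ x, 0 ≤ p x) (hq0 : ∀ x, 0 ≤ q x)
    (hp1 : ∫ x, p x ∂ν = 1) (hq1 : ∫ x, q x ∂ν = 1)
    (hpos : ∀ᵐ x ∂ν, 0 < p x + q x)
    (hJSp : Integrable (fun x => p x * Real.log (p x / ((p x + q x) / 2))) ν)
    (hJSq : Integrable (fun x => q x * Real.log (q x / ((p x + q x) / 2))) ν) :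
    ((1/2) * ∫ x, p x * Real.log (p x / (p x + q x)) ∂ν
        + (1/2) * ∫ x, q x * Real.log (q x / (p x + q x)) ∂ν
      = ((1/2) * ∫ x, p x * Real.log (p x / ((p x + q x) / 2)) ∂ν
          + (1/2) * ∫ x, q x * Real.log (q x / ((p x + q x) / 2)) ∂ν)
        - Real.log 2)
    ∧ (∀ f : X → ℝ, Measurable f → (∀ x, f x ∈ Set.Ioo (0:ℝ) 1) →
        Integrable (fun x => p x * Real.log (f x)) ν →
        Integrable (fun x => q x * Real.log (1 - f x)) ν →
        (1/2) * ∫ x, p x * Real.log (f x) ∂ν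
          + (1/2) * ∫ x, q x * Real.log (1 - f x) ∂ν
        ≤ ((1/2) * ∫ x, p x * Real.log (p x / ((p x + q x) / 2)) ∂ν
            + (1/2) * ∫ x, q x * Real.log (q x / ((p x + q x) / 2)) ∂ν)
          - Real.log 2) := by
  have hpInt : Integrable p ν := by
    by_contra h
    rw [integral_undef h] at hp1; norm_num at hp1
  have hqInt : Integrable q ν := by
    by_contra h
    rw [integral_undef h] at hq1; norm_num at hq1
  have hsplit_p : ∀ x, p x * Real.log (p x / ((p x + q x) / 2))
      = p x * Real.log (p x / (p x + q x)) + p x * Real.log 2 :=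
    fun x => split_log _ _ (hp0 x) (hq0 x)
  have hsplit_q : ∀ x, q x * Real.log (q x / ((p x + q x) / 2))
      = q x * Real.log (q x / (p x + q x)) + q x * Real.log 2 := by
    intro x
    have := split_log (q x) (p x) (hq0 x) (hp0 x)
    rwa [add_comm (q x) (p x)] at this
  have hInt1 : Integrable (fun x => p x * Real.log (p x / (p x + q x))) ν := by
    have h2 : Integrable
        (fun x => p x * Real.log (p x / ((p x + q x) / 2)) - p x * Real.log 2) ν :=
      hJSp.sub (hpInt.mul_const _)
    exact h2.congr (Filter.Eventually.of_forall fun x => by simp only [hsplit_p x]; ring)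
  have hInt2 : Integrable (fun x => q x * Real.log (q x / (p x + q x))) ν := by
    have h2 : Integrable
        (fun x => q x * Real.log (q x / ((p x + q x) / 2)) - q x * Real.log 2) ν :=
      hJSq.sub (hqInt.mul_const _)
    exact h2.congr (Filter.Eventually.of_forall fun x => by simp only [hsplit_q x]; ring)
  have hIp : ∫ x, p x * Real.log (p x / ((p x + q x) / 2)) ∂ν
      = (∫ x, p x * Real.log (p x / (p x + q x)) ∂ν) + Real.log 2 := by
    calc ∫ x, p x * Real.log (p x / ((p x + q x) / 2)) ∂ν
        = ∫ x, (p x * Real.log (p x / (p x + q x)) + p x * Real.log 2) ∂ν := by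
          congr 1; funext x; exact hsplit_p x
      _ = (∫ x, p x * Real.log (p x / (p x + q x)) ∂ν) + Real.log 2 := by
          rw [integral_add hInt1 (hpInt.mul_const _), integral_mul_const, hp1, one_mul]
  have hIq : ∫ x, q x * Real.log (q x / ((p x + q x) / 2)) ∂ν
      = (∫ x, q x * Real.log (q x / (p x + q x)) ∂ν) + Real.log 2 := by
    calc ∫ x, q x * Real.log (q x / ((p x + q x) / 2)) ∂ν
        = ∫ x, (q x * Real.log (q x / (p x + q x)) + q x * Real.log 2) ∂ν := by
          congr 1; funext x; exact hsplit_q x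
      _ = (∫ x, q x * Real.log (q x / (p x + q x)) ∂ν) + Real.log 2 := by
          rw [integral_add hInt2 (hqInt.mul_const _), integral_mul_const, hq1, one_mul]
  constructor
  · rw [hIp, hIq]; ring
  · intro f hf hfmem hint1 hint2
    have hle : ∫ x, (p x * Real.log (f x) + q x * Real.log (1 - f x)) ∂ν
        ≤ ∫ x, (p x * Real.log (p x / (p x + q x))
            + q x * Real.log (q x / (p x + q x))) ∂ν := by
      refine integral_mono (hint1.add hint2) (hInt1.add hInt2) fun x => ?_
      exact key_ineq (p x) (q x) (f x) (hp0 x) (hq0 x) (hfmem x).1 (hfmem x).2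
    rw [integral_add hint1 hint2, integral_add hInt1 hInt2] at hle
    rw [hIp, hIq]
    linarith
end
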